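/- arXiv:1103.0430 — 4 statements merged into one kernel-verified Lean document; each statement's English description precedes it below -/
import Mathlib

section
/- Let n ≥ 2 be an integer, let γ ∈ ℝ, and let φ : ℝⁿ → ℝ be given by φ(x) = Σ_{j=0}^{n} c_j E_j(x) for real coefficients c_0, c_1, …, c_n, where c_j ≠ 0 for at least one j ≥ 2 (i.e., φ has degree at least two). If a point a ∈ H = {x ∈ ℝⁿ : x_1 + ⋯ + x_n = γ} is a local extremum of the restriction of φ to H (meaning there is a neighborhood N of a in H with φ(x) ≥ φ(a) for all x ∈ N, or φ(x) ≤ φ(a) for all x ∈ N), then a = (γ/n, γ/n, …, γ/n). -/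
/-- The `j`-th elementary symmetric polynomial of `x : Fin n → ℝ`
(`E 0 = 1`, `E j = 0` for `j > n`). -/
noncomputable def esymm (n j : ℕ) (x : Fin n → ℝ) : ℝ :=
  ∑ t ∈ Finset.powersetCard j (Finset.univ : Finset (Fin n)), ∏ i ∈ t, x i

/-!
Moving two coordinates in opposite directions, `x ↦ x + t (eᵢ - eⱼ)`, stays on `H` and fixes
`xᵢ + xⱼ`, so only the product `xᵢ xⱼ` changes and
`φ (x + t (eᵢ - eⱼ)) = φ x + ((xⱼ - xᵢ) t - t²) Pᵢⱼ(x)`, where `Pᵢⱼ(x) = ∑ₖ c_{k+2} Eₖ` of the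
other coordinates. At a local extremum with `xᵢ ≠ xⱼ` the derivative in `t` vanishes, so
`Pᵢⱼ(x) = 0`, `φ` is constant along that line, and nearby points of the line are local extrema too.

If `a` is not constant, one such move yields a local extremum `b` whose `p`-th coordinate differs
from all others. Moving each other coordinate `q` against `p` then lets `b q` vary freely, and
`∑ₖ dₖ Eₖ(u, y) = ∑ₖ dₖ Eₖ(y) + u ∑ₖ d_{k+1} Eₖ(y)` is affine in `u`; freeing the coordinates one
at a time shows `c₂ = ⋯ = cₙ = 0`, contradicting `deg φ ≥ 2`.
-/

open Finset Filter Topology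

namespace Multiset

variable {R : Type*} [CommSemiring R]

@[simp]
theorem esymm_zero (s : Multiset R) : s.esymm 0 = 1 := by
  simp [esymm]

theorem esymm_cons_succ (a : R) (s : Multiset R) (k : ℕ) :
    (a ::ₘ s).esymm (k + 1) = s.esymm (k + 1) + a * s.esymm k := by
  simp [esymm, powersetCard_cons, sum_map_mul_left, map_map]

theorem esymm_eq_zero_of_card_lt {s : Multiset R} {k : ℕ} (h : card s < k) : s.esymm k = 0 := by
  simp [esymm, powersetCard_eq_empty _ h]

end Multiset

section esymmComb

variable {R : Type*} [CommSemiring R]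

noncomputable def esymmComb (c : ℕ → R) (s : Multiset R) : R :=
  ∑ j ∈ range (Multiset.card s + 1), c j * s.esymm j

theorem esymmComb_eq_sum_range (c : ℕ → R) {s : Multiset R} {N : ℕ}
    (h : Multiset.card s ≤ N) : esymmComb c s = ∑ j ∈ range (N + 1), c j * s.esymm j := by
  refine sum_subset (by simpa using h) fun j _ hj => ?_
  rw [Multiset.esymm_eq_zero_of_card_lt (by simpa using hj), mul_zero]

theorem esymmComb_zero (c : ℕ → R) : esymmComb c 0 = c 0 := by
  simp [esymmComb]

theorem esymmComb_cons (c : ℕ → R) (u : R) (s : Multiset R) :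
    esymmComb c (u ::ₘ s) = esymmComb c s + u * esymmComb (fun j => c (j + 1)) s := by
  rw [esymmComb_eq_sum_range c (Multiset.card_cons u s).le,
    esymmComb_eq_sum_range c (Nat.le_succ _), esymmComb,
    sum_range_succ' (fun j => c j * (u ::ₘ s).esymm j),
    sum_range_succ' (fun j => c j * s.esymm j), mul_sum]
  simp only [Multiset.esymm_cons_succ, Multiset.esymm_zero, mul_add, sum_add_distrib,
    mul_left_comm u]
  ring

theorem esymmComb_cons_cons (c : ℕ → R) (u v : R) (s : Multiset R) :
    esymmComb c (u ::ₘ v ::ₘ s) = esymmComb c s + (u + v) * esymmComb (fun j => c (j + 1)) s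
      + u * v * esymmComb (fun j => c (j + 2)) s := by
  simp only [esymmComb_cons]
  ring

end esymmComb

theorem IsLocalExtrOn.eventually_isLocalExtrOn {α X β : Type*} [TopologicalSpace X] [Preorder β]
    {f : X → β} {s : Set X} {a : X} {g : α → X} {l : Filter α} (hf : IsLocalExtrOn f s a)
    (hg : Tendsto g l (𝓝[s] a)) (hfg : ∀ᶠ y in l, f (g y) = f a) :
    ∀ᶠ y in l, IsLocalExtrOn f s (g y) := by
  rcases hf with hf | hf
  · filter_upwards [hg.eventually (eventually_eventually_nhdsWithin.2 hf), hfg] with y hy hfy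
    exact Or.inl (hy.mono fun x hx => hfy.le.trans hx)
  · filter_upwards [hg.eventually (eventually_eventually_nhdsWithin.2 hf), hfg] with y hy hfy
    exact Or.inr (hy.mono fun x hx => hx.trans hfy.ge)

theorem eq_zero_of_eventually_add_mul_eq_zero {A B : ℝ} (h : ∀ᶠ t in 𝓝 0, A + t * B = 0) :
    A = 0 ∧ B = 0 := by
  obtain ⟨t, ht, ht0⟩ := ((h.filter_mono nhdsWithin_le_nhds).and self_mem_nhdsWithin).exists
    (f := 𝓝[≠] (0 : ℝ))
  have hA : A = 0 := by simpa using h.self_of_nhds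
  refine ⟨hA, ?_⟩
  rw [hA, zero_add] at ht
  exact (mul_eq_zero.1 ht).resolve_left ht0

theorem eventually_forall_apply_ne_apply {ι X : Type*} [Finite ι] [TopologicalSpace X]
    [T2Space X] {b : ι → X} {p : ι} (hb : ∀ r ≠ p, b r ≠ b p) :
    ∀ᶠ x in 𝓝 b, ∀ r ≠ p, x r ≠ x p := by
  refine eventually_all.2 fun r => ?_
  by_cases hr : r = p
  · exact .of_forall fun _ h => absurd hr h
  · exact (isOpen_ne_fun (continuous_apply r) (continuous_apply p)).eventually_mem
      (hb r hr) |>.mono fun _ h _ => h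

def sumHyperplane (ι : Type*) [Fintype ι] (γ : ℝ) : Set (ι → ℝ) := {x | ∑ i, x i = γ}

noncomputable def esymmCombPi {ι : Type*} [Fintype ι] (c : ℕ → ℝ) (x : ι → ℝ) : ℝ :=
  esymmComb c (univ.val.map x)

theorem exists_apply_ne_apply_of_mem_sumHyperplane {ι : Type*} [Fintype ι] {γ : ℝ}
    {a : ι → ℝ} (ha : a ∈ sumHyperplane ι γ) (hne : a ≠ fun _ => γ / Fintype.card ι) :
    ∃ p q, a p ≠ a q := by
  by_contra! hconst
  refine hne (funext fun p => ?_)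
  have : Nonempty ι := ⟨p⟩
  rw [eq_div_iff (Nat.cast_ne_zero.2 Fintype.card_ne_zero), ← ha]
  simp [hconst _ p, mul_comm]

section pairDir

variable {ι : Type*} [DecidableEq ι]

def pairDir (i j : ι) : ι → ℝ := Pi.single i 1 - Pi.single j 1

variable {i j : ι}

@[simp]
theorem pairDir_apply_left (hij : i ≠ j) : pairDir i j i = 1 := by
  simp [pairDir, hij]

@[simp]
theorem pairDir_apply_right (hij : i ≠ j) : pairDir i j j = -1 := by
  simp [pairDir, hij.symm]

theorem pairDir_apply_of_ne {r : ι} (hi : r ≠ i) (hj : r ≠ j) : pairDir i j r = 0 := by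
  simp [pairDir, hi, hj]

variable [Fintype ι]

theorem add_smul_pairDir_mem_sumHyperplane {γ : ℝ} {b : ι → ℝ} (hb : b ∈ sumHyperplane ι γ)
    (t : ℝ) : b + t • pairDir i j ∈ sumHyperplane ι γ := by
  simpa [sumHyperplane, pairDir, sum_add_distrib, ← mul_sum] using hb

theorem tendsto_add_smul_pairDir {γ : ℝ} {b : ι → ℝ} (hb : b ∈ sumHyperplane ι γ) :
    Tendsto (fun t : ℝ => b + t • pairDir i j) (𝓝 0) (𝓝[sumHyperplane ι γ] b) := by
  refine tendsto_nhdsWithin_iff.2 ⟨?_, .of_forall (add_smul_pairDir_mem_sumHyperplane hb)⟩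
  exact (by fun_prop : Continuous fun t : ℝ => b + t • pairDir i j).tendsto' 0 b (by simp)

theorem univ_val_map_eq_cons_cons (x : ι → ℝ) (hij : i ≠ j) :
    univ.val.map x = x i ::ₘ x j ::ₘ (univ \ {i, j}).val.map x := by
  have huniv : (univ : Finset ι) = insert i (insert j (univ \ {i, j})) := by
    ext r; by_cases r = i <;> by_cases r = j <;> simp_all
  conv_lhs => rw [huniv, insert_val_of_notMem (by simp [hij]), insert_val_of_notMem (by simp)]
  rw [Multiset.map_cons, Multiset.map_cons]

theorem esymmCombPi_add_smul_pairDir (c : ℕ → ℝ) (b : ι → ℝ) (hij : i ≠ j) (t : ℝ) :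
    esymmCombPi c (b + t • pairDir i j) = esymmCombPi c b
      + ((b j - b i) * t - t ^ 2) * esymmComb (fun k => c (k + 2)) ((univ \ {i, j}).val.map b) := by
  have hrest : (univ \ {i, j}).val.map (b + t • pairDir i j) = (univ \ {i, j}).val.map b :=
    Multiset.map_congr rfl fun r hr => by
      have : r ≠ i ∧ r ≠ j := by simpa [not_or] using (mem_sdiff.1 hr).2
      simp [pairDir_apply_of_ne this.1 this.2]
  rw [esymmCombPi, esymmCombPi, univ_val_map_eq_cons_cons _ hij, univ_val_map_eq_cons_cons b hij,
    hrest, esymmComb_cons_cons, esymmComb_cons_cons]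
  simp only [Pi.add_apply, Pi.smul_apply, smul_eq_mul, pairDir_apply_left hij,
    pairDir_apply_right hij]
  ring

theorem univ_sdiff_val_map_add_smul_pairDir {b : ι → ℝ} {T : Finset ι} (hij : i ≠ j)
    (hiT : i ∉ T) (t : ℝ) :
    (univ \ insert j T).val.map (b + t • pairDir i j)
      = (b i + t) ::ₘ (univ \ insert j (insert i T)).val.map b := by
  have hS : univ \ insert j T = insert i (univ \ insert j (insert i T)) := by
    ext r; by_cases r = i <;> simp_all
  rw [hS, insert_val_of_notMem (by simp), Multiset.map_cons]
  congr 1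
  · simp [hij]
  · refine Multiset.map_congr rfl fun r hr => ?_
    have : r ≠ j ∧ r ≠ i ∧ r ∉ T := by simpa [not_or] using (mem_sdiff.1 hr).2
    simp [pairDir_apply_of_ne this.2.1 this.1]

end pairDir

section extremum

variable {ι : Type*} [Fintype ι] [DecidableEq ι] {c : ℕ → ℝ} {γ : ℝ} {b : ι → ℝ} {i j : ι}

theorem IsLocalExtrOn.esymmComb_compl_pair_eq_zero (hb : b ∈ sumHyperplane ι γ)
    (hext : IsLocalExtrOn (esymmCombPi c) (sumHyperplane ι γ) b) (hij : i ≠ j)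
    (hbij : b i ≠ b j) :
    esymmComb (fun k => c (k + 2)) ((univ \ {i, j}).val.map b) = 0 := by
  set P := esymmComb (fun k => c (k + 2)) ((univ \ {i, j}).val.map b)
  have hloc : IsLocalExtr (fun t : ℝ => esymmCombPi c (b + t • pairDir i j)) 0 :=
    IsExtrFilter.comp_tendsto (f := esymmCombPi c) (by rw [zero_smul, add_zero]; exact hext)
      (tendsto_add_smul_pairDir hb)
  have hquad : HasDerivAt (fun t : ℝ => (b j - b i) * t - t ^ 2) (b j - b i) 0 :=
    (((hasDerivAt_id' 0).const_mul _).sub (hasDerivAt_pow 2 0)).congr_deriv (by simp)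
  have hderiv : HasDerivAt (fun t : ℝ => esymmCombPi c (b + t • pairDir i j))
      ((b j - b i) * P) 0 :=
    ((hquad.mul_const P).const_add _).congr_of_eventuallyEq
      (.of_forall (esymmCombPi_add_smul_pairDir c b hij))
  exact (mul_eq_zero.1 (hloc.hasDerivAt_eq_zero hderiv)).resolve_left (sub_ne_zero.2 hbij.symm)

theorem IsLocalExtrOn.eventually_isLocalExtrOn_add_smul_pairDir (hb : b ∈ sumHyperplane ι γ)
    (hext : IsLocalExtrOn (esymmCombPi c) (sumHyperplane ι γ) b) (hij : i ≠ j)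
    (hbij : b i ≠ b j) :
    ∀ᶠ t in 𝓝 (0 : ℝ), IsLocalExtrOn (esymmCombPi c) (sumHyperplane ι γ) (b + t • pairDir i j) :=
  hext.eventually_isLocalExtrOn (tendsto_add_smul_pairDir hb) <| .of_forall fun t => by
    rw [esymmCombPi_add_smul_pairDir c b hij, hext.esymmComb_compl_pair_eq_zero hb hij hbij,
      mul_zero, add_zero]

theorem IsLocalExtrOn.exists_forall_apply_ne_apply {p q : ι} (hb : b ∈ sumHyperplane ι γ)
    (hext : IsLocalExtrOn (esymmCombPi c) (sumHyperplane ι γ) b) (hpq : b p ≠ b q) :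
    ∃ b' ∈ sumHyperplane ι γ,
      IsLocalExtrOn (esymmCombPi c) (sumHyperplane ι γ) b' ∧ ∀ r ≠ p, b' r ≠ b' p := by
  have hpq' : p ≠ q := ne_of_apply_ne b hpq
  have hsep : ∀ᶠ t in 𝓝[≠] (0 : ℝ), ∀ r ≠ p,
      (b + t • pairDir p q) r ≠ (b + t • pairDir p q) p := by
    refine eventually_all.2 fun r => ?_
    by_cases hrp : r = p
    · exact .of_forall fun _ h => absurd hrp h
    by_cases hrq : r = q
    · subst hrq
      refine nhdsWithin_le_nhds <| Eventually.mono ((ContinuousAt.ne_iff_eventually_ne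
        (f := fun t : ℝ => b r - t) (g := fun t => b p + t) (by fun_prop) (by fun_prop)).1
        (by simpa using hpq.symm)) fun t ht _ => ?_
      simpa [hpq', sub_eq_add_neg] using ht
    · simp only [Pi.add_apply, Pi.smul_apply, pairDir_apply_of_ne hrp hrq,
        pairDir_apply_left hpq', smul_eq_mul, mul_zero, add_zero, mul_one]
      by_cases hbr : b r = b p
      · filter_upwards [self_mem_nhdsWithin] with t ht _
        simpa [hbr] using ht
      · exact nhdsWithin_le_nhds <| Eventually.mono ((ContinuousAt.ne_iff_eventually_ne
          (f := fun _ : ℝ => b r) (g := fun t => b p + t) (by fun_prop) (by fun_prop)).1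
          (by simpa using hbr)) fun t ht _ => ht
  obtain ⟨t, hext', hne⟩ := ((hext.eventually_isLocalExtrOn_add_smul_pairDir hb hpq' hpq
    ).filter_mono nhdsWithin_le_nhds |>.and hsep).exists
  exact ⟨_, add_smul_pairDir_mem_sumHyperplane hb t, hext', hne⟩

theorem esymmComb_eq_zero_of_isLocalExtrOn {p : ι} {T : Finset ι} (hT : T.Nonempty)
    (hpT : p ∉ T) (hb : b ∈ sumHyperplane ι γ)
    (hext : IsLocalExtrOn (esymmCombPi c) (sumHyperplane ι γ) b) (hp : ∀ r ≠ p, b r ≠ b p)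
    {m : ℕ} (hm : 2 ≤ m) (hmT : m ≤ #T + 1) :
    esymmComb (fun k => c (k + m)) ((univ \ insert p T).val.map b) = 0 := by
  induction hT using Finset.Nonempty.cons_induction generalizing b m with
  | singleton q =>
    obtain rfl : m = 2 := by rw [card_singleton] at hmT; omega
    have hqp : q ≠ p := by simpa [eq_comm] using hpT
    exact hext.esymmComb_compl_pair_eq_zero hb hqp.symm (hp q hqp).symm
  | cons q T hqT hT ih =>
    have hqp : q ≠ p := by rintro rfl; simp at hpT
    have hpT' : p ∉ T := fun h => hpT (mem_cons_of_mem h)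
    rw [cons_eq_insert] at hpT hmT ⊢
    set S := univ \ insert p (insert q T)
    have hcoef : ∀ k, 2 ≤ k → k ≤ #T + 1 →
        esymmComb (fun j => c (j + k)) (S.val.map b) = 0 ∧
          esymmComb (fun j => c (j + (k + 1))) (S.val.map b) = 0 := by
      intro k hk hkT
      have hshift : (fun j => c (j + 1 + k)) = fun j => c (j + (k + 1)) :=
        funext fun j => congrArg c (by omega)
      have hev : ∀ᶠ t in 𝓝 (0 : ℝ), (esymmComb (fun j => c (j + k)) (S.val.map b)
          + b q * esymmComb (fun j => c (j + (k + 1))) (S.val.map b))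
          + t * esymmComb (fun j => c (j + (k + 1))) (S.val.map b) = 0 := by
        filter_upwards [hext.eventually_isLocalExtrOn_add_smul_pairDir hb hqp (hp q hqp),
          ((tendsto_add_smul_pairDir hb).mono_right nhdsWithin_le_nhds).eventually
            (eventually_forall_apply_ne_apply hp)] with t hextt hpt
        have := ih hpT' (add_smul_pairDir_mem_sumHyperplane hb t) hextt hpt hk hkT
        rw [univ_sdiff_val_map_add_smul_pairDir hqp hqT, esymmComb_cons, hshift] at this
        linear_combination this
      obtain ⟨hA, hB⟩ := eq_zero_of_eventually_add_mul_eq_zero hev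
      exact ⟨by simpa [hB] using hA, hB⟩
    rw [card_insert_of_notMem hqT] at hmT
    obtain rfl | hm3 := hm.eq_or_lt
    · exact (hcoef 2 le_rfl (by have := hT.card_pos; omega)).1
    · simpa [Nat.sub_add_cancel (by omega : 1 ≤ m)] using (hcoef (m - 1) (by omega) (by omega)).2

end extremum

theorem extrema_on_hyperplane_general (n : ℕ) (γ : ℝ) (c : ℕ → ℝ)
    (hdeg : ∃ j, 2 ≤ j ∧ j ≤ n ∧ c j ≠ 0)
    (φ : (Fin n → ℝ) → ℝ)
    (hφ : ∀ x, φ x = ∑ j ∈ Finset.range (n + 1), c j * esymm n j x)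
    (H : Set (Fin n → ℝ)) (hH : H = {x | ∑ i, x i = γ})
    (a : Fin n → ℝ) (ha : a ∈ H)
    (hext : IsLocalMinOn φ H a ∨ IsLocalMaxOn φ H a) :
    a = fun _ => γ / n := by
  obtain rfl : φ = esymmCombPi c := funext fun x => by
    rw [hφ, esymmCombPi, esymmComb_eq_sum_range c (N := n) (by simp)]
    simp only [esymm, Finset.esymm_map_val]
  subst hH
  by_contra hne
  obtain ⟨p, q, hpq⟩ := exists_apply_ne_apply_of_mem_sumHyperplane ha (by simpa using hne)
  obtain ⟨b, hb, hextb, hbp⟩ := IsLocalExtrOn.exists_forall_apply_ne_apply ha hext hpq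
  obtain ⟨j, hj2, hjn, hcj⟩ := hdeg
  have hq : q ∈ univ.erase p := mem_erase.2 ⟨ne_of_apply_ne a hpq.symm, mem_univ q⟩
  have hc := esymmComb_eq_zero_of_isLocalExtrOn ⟨q, hq⟩ (notMem_erase p univ) hb hextb hbp hj2
    (by rw [card_erase_of_mem (mem_univ p), card_univ, Fintype.card_fin]; omega)
  rw [insert_erase (mem_univ p), sdiff_self, bot_eq_empty, empty_val, Multiset.map_zero,
    esymmComb_zero, zero_add] at hc
  exact hcj hc

/-- Kovačec–Kuhlmann–Riener, Theorem 1: a real linear combination of elementary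
symmetric polynomials of degree at least two has, on the hyperplane
`H = {x : E₁(x) = γ}`, at most the symmetric point `γ/n·(1,…,1)` as local extremum. -/
theorem extrema_on_hyperplane (n : ℕ) (hn : 2 ≤ n) (γ : ℝ) (c : ℕ → ℝ)
    (hdeg : ∃ j, 2 ≤ j ∧ j ≤ n ∧ c j ≠ 0)
    (φ : (Fin n → ℝ) → ℝ)
    (hφ : ∀ x, φ x = ∑ j ∈ Finset.range (n + 1), c j * esymm n j x)
    (H : Set (Fin n → ℝ)) (hH : H = {x | ∑ i, x i = γ})
    (a : Fin n → ℝ) (ha : a ∈ H)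
    (hext : IsLocalMinOn φ H a ∨ IsLocalMaxOn φ H a) :
    a = fun _ => γ / n :=
  extrema_on_hyperplane_general n γ c hdeg φ hφ H hH a ha hext
end

section
/- Let f ∈ ℝ[t] be a hyperbolic polynomial of degree n (all n roots of f, counted with multiplicity, are real) having exactly s distinct roots, where 1 ≤ s ≤ n−1, and suppose all roots of f lie in an open interval I = (α, β). Then there exists a polynomial g ∈ ℝ[t] of degree n − s and an ε₀ > 0 such that for every ε with 0 < ε < ε₀, both polynomials f + εg and f − εg are hyperbolic, have strictly more than s distinct roots, and all of their roots lie in I. -/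
/-!
Write `f = g * p` with `p = c ∏ (t - a)` over the distinct roots `a` of `f` and
`g = ∏ (t - a) ^ (m_a - 1)`, so that `f ± ε g = g * (p ± ε)`. The squarefree `p` changes sign
at each of its `s` roots, so for small `ε` the shift `p ± ε` still changes sign on `s` disjoint
small intervals inside `I` around them; having degree `s`, it has exactly these `s` simple roots,
none of which is a root of `g` (there `p ± ε` takes the value `± ε`). Hence `f ± ε g` has `n`
real roots in `I`, and more than `s` distinct ones because `g` has degree `n - s ≥ 1`.
-/

open Polynomial Filter Topology Metric Set

section

variable {R : Type*} [CommRing R] [IsDomain R]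

theorem roots_of_exists_isRoot_mem_pairwiseDisjoint {ι : Type*} {P : R[X]} (hP : P ≠ 0)
    {s : Finset ι} {S : ι → Set R} (hS : (s : Set ι).PairwiseDisjoint S)
    (hroot : ∀ i ∈ s, ∃ x ∈ S i, P.IsRoot x) (hdeg : P.natDegree ≤ s.card) :
    P.roots.card = s.card ∧ P.roots.Nodup ∧ ∀ x ∈ P.roots, ∃ i ∈ s, x ∈ S i := by
  classical
  choose! ρ hρS hρroot using hroot
  have hρ_mem : ∀ i ∈ s, ρ i ∈ P.roots.toFinset := fun i hi =>
    Multiset.mem_toFinset.mpr ((mem_roots hP).mpr (hρroot i hi))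
  have hρ_inj : Set.InjOn ρ s := fun i hi j hj hij =>
    hS.elim hi hj (Set.not_disjoint_iff.mpr ⟨ρ i, hρS i hi, hij ▸ hρS j hj⟩)
  have h₁ : s.card ≤ P.roots.toFinset.card := Finset.card_le_card_of_injOn ρ hρ_mem hρ_inj
  have h₂ : P.roots.toFinset.card ≤ P.roots.card := Multiset.toFinset_card_le _
  have h₃ : P.roots.card ≤ s.card := (card_roots' P).trans hdeg
  have himage : s.image ρ = P.roots.toFinset :=
    Finset.eq_of_subset_of_card_le (Finset.image_subset_iff.mpr hρ_mem)
      (by rw [Finset.card_image_of_injOn hρ_inj]; omega)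
  refine ⟨by omega, Multiset.toFinset_card_eq_card_iff_nodup.mp (by omega), fun x hx => ?_⟩
  obtain ⟨i, hi, rfl⟩ := Finset.mem_image.mp (himage ▸ Multiset.mem_toFinset.mpr hx)
  exact ⟨i, hi, hρS i hi⟩

variable [DecidableEq R]

noncomputable def excessPart (f : R[X]) : R[X] :=
  ((f.roots - f.roots.dedup).map (X - C ·)).prod

noncomputable def squarefreePart (f : R[X]) : R[X] :=
  C f.leadingCoeff * (f.roots.dedup.map (X - C ·)).prod

theorem excessPart_mul_squarefreePart {f : R[X]} (hf : f.roots.card = f.natDegree) :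
    excessPart f * squarefreePart f = f := by
  conv_rhs => rw [← C_leadingCoeff_mul_prod_multiset_X_sub_C hf,
    ← tsub_add_cancel_of_le (Multiset.dedup_le f.roots), Multiset.map_add, Multiset.prod_add]
  rw [excessPart, squarefreePart]
  ring

theorem roots_excessPart (f : R[X]) : (excessPart f).roots = f.roots - f.roots.dedup :=
  roots_multiset_prod_X_sub_C _

theorem roots_squarefreePart (f : R[X]) : (squarefreePart f).roots = f.roots.dedup := by
  rcases eq_or_ne f 0 with rfl | hf
  · simp [squarefreePart]
  rw [squarefreePart, roots_C_mul _ (leadingCoeff_ne_zero.mpr hf), roots_multiset_prod_X_sub_C]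

theorem natDegree_squarefreePart (f : R[X]) :
    (squarefreePart f).natDegree = f.roots.toFinset.card := by
  rcases eq_or_ne f 0 with rfl | hf
  · simp [squarefreePart]
  rw [squarefreePart, natDegree_C_mul (leadingCoeff_ne_zero.mpr hf),
    natDegree_multiset_prod_X_sub_C_eq_card, Multiset.card_toFinset]

theorem not_isRoot_squarefreePart_add_C {f : R[X]} {e x : R} (he : e ≠ 0) (hx : x ∈ f.roots) :
    ¬ (squarefreePart f + C e).IsRoot x := by
  have : (squarefreePart f).IsRoot x :=
    isRoot_of_mem_roots (by rwa [roots_squarefreePart, Multiset.mem_dedup])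
  simpa [IsRoot, this.eq_zero] using he

theorem roots_add_C_mul_excessPart {f : R[X]} (hf : f.roots.card = f.natDegree) {e : R}
    (he : squarefreePart f + C e ≠ 0) :
    (f + C e * excessPart f).roots =
      (f.roots - f.roots.dedup) + (squarefreePart f + C e).roots := by
  have hfactor : f + C e * excessPart f = excessPart f * (squarefreePart f + C e) := by
    linear_combination (-1 : R[X]) * excessPart_mul_squarefreePart hf
  have hg : excessPart f ≠ 0 :=
    (monic_multiset_prod_of_monic _ _ fun a _ => monic_X_sub_C a).ne_zero
  rw [hfactor, roots_mul (mul_ne_zero hg he), roots_excessPart]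

theorem card_toFinset_roots_add_C_mul_excessPart {f : R[X]} (hf : f.roots.card = f.natDegree)
    {e : R} (he : e ≠ 0) (hne : squarefreePart f + C e ≠ 0)
    (hnodup : (squarefreePart f + C e).roots.Nodup) :
    (f + C e * excessPart f).roots.toFinset.card =
      (f.roots - f.roots.dedup).toFinset.card + (squarefreePart f + C e).roots.card := by
  rw [roots_add_C_mul_excessPart hf hne, Multiset.toFinset_add,
    Finset.card_union_of_disjoint, Multiset.toFinset_card_of_nodup hnodup]
  refine Finset.disjoint_left.mpr fun x hx hx' => not_isRoot_squarefreePart_add_C he ?_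
    (isRoot_of_mem_roots (Multiset.mem_toFinset.mp hx'))
  exact Multiset.mem_of_le tsub_le_self (Multiset.mem_toFinset.mp hx)

end

theorem exists_mem_Ioo_eq_zero_of_mul_neg {f : ℝ → ℝ} {a b : ℝ} (hab : a ≤ b)
    (hf : ContinuousOn f (Icc a b)) (h : f a * f b < 0) : ∃ x ∈ Ioo a b, f x = 0 := by
  rcases mul_neg_iff.mp h with ⟨ha, hb⟩ | ⟨ha, hb⟩
  · exact intermediate_value_Ioo' hab hf ⟨hb, ha⟩
  · exact intermediate_value_Ioo hab hf ⟨ha, hb⟩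

theorem eventually_exists_isRoot_add_C {p : ℝ[X]} {a b : ℝ} (hab : a ≤ b)
    (h : p.eval a * p.eval b < 0) : ∀ᶠ e in 𝓝 0, ∃ x ∈ Ioo a b, (p + C e).IsRoot x := by
  have hcont : Continuous fun e : ℝ => (p.eval a + e) * (p.eval b + e) := by fun_prop
  filter_upwards [hcont.continuousAt.eventually_lt continuousAt_const (by simpa using h)]
    with e he
  simpa using exists_mem_Ioo_eq_zero_of_mul_neg hab (p + C e).continuous.continuousOn
    (by simpa using he)

theorem eventually_eval_sub_mul_eval_add_neg {p : ℝ[X]} {r : ℝ}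
    (hr : p.rootMultiplicity r = 1) :
    ∀ᶠ h in 𝓝[>] 0, p.eval (r - h) * p.eval (r + h) < 0 := by
  have hp : p ≠ 0 := by rintro rfl; simp at hr
  obtain ⟨q, hpq, hq⟩ : ∃ q : ℝ[X], p = (X - C r) * q ∧ q.eval r ≠ 0 := by
    refine ⟨_, ?_, eval_divByMonic_pow_rootMultiplicity_ne_zero r hp⟩
    conv_lhs => rw [← pow_mul_divByMonic_rootMultiplicity_eq p r]
    rw [hr, pow_one]
  have hcont : Continuous fun h : ℝ => q.eval (r - h) * q.eval (r + h) := by fun_prop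
  have hpos : ∀ᶠ h in 𝓝 0, 0 < q.eval (r - h) * q.eval (r + h) :=
    continuousAt_const.eventually_lt hcont.continuousAt (by simpa using mul_self_pos.mpr hq)
  filter_upwards [nhdsWithin_le_nhds hpos, self_mem_nhdsWithin] with h hqh (hh : 0 < h)
  have : p.eval (r - h) * p.eval (r + h) = -(h ^ 2 * (q.eval (r - h) * q.eval (r + h))) := by
    rw [hpq]; simp only [eval_mul, eval_sub, eval_X, eval_C]; ring
  rw [this]
  exact neg_neg_of_pos (mul_pos (pow_pos hh 2) hqh)

theorem eventually_pairwiseDisjoint_ball {α : Type*} [MetricSpace α] (T : Finset α) :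
    ∀ᶠ δ in 𝓝 (0 : ℝ), (T : Set α).PairwiseDisjoint (ball · δ) := by
  have hcont : Continuous fun δ : ℝ => δ + δ := by fun_prop
  have hlim : Tendsto (fun δ : ℝ => δ + δ) (𝓝 0) (𝓝 0) := by simpa using hcont.tendsto 0
  filter_upwards [(eventually_all_finset T).mpr fun x _ => (eventually_all_finset T).mpr
    fun y _ => eventually_imp_distrib_left.mpr fun hxy : x ≠ y =>
      hlim.eventually (eventually_lt_nhds (dist_pos.mpr hxy))] with δ hδ x hx y hy hxy
  exact ball_disjoint_ball (hδ x hx y hy hxy).le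

theorem eventually_roots_add_C {p : ℝ[X]} (hsplit : p.roots.card = p.natDegree)
    (hnodup : p.roots.Nodup) {U : Set ℝ} (hU : IsOpen U) (hpU : ∀ x ∈ p.roots, x ∈ U) :
    ∀ᶠ e in 𝓝 0, (p + C e).roots.card = p.natDegree ∧ (p + C e).roots.Nodup ∧
      ∀ x ∈ (p + C e).roots, x ∈ U := by
  rcases Nat.eq_zero_or_pos p.natDegree with hdeg | hdeg
  · obtain ⟨c, rfl⟩ := natDegree_eq_zero.mp hdeg
    exact Eventually.of_forall fun e => by simp only [← C_add, roots_C]; simp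
  classical
  set T := p.roots.toFinset
  have hT : T.card = p.natDegree := by rw [Multiset.toFinset_card_of_nodup hnodup, hsplit]
  have hsimple : ∀ r ∈ T, p.rootMultiplicity r = 1 := fun r hr =>
    count_roots p ▸ Multiset.count_eq_one_of_mem hnodup (Multiset.mem_toFinset.mp hr)
  have hradius : ∀ᶠ δ in 𝓝[>] 0, (∀ r ∈ T, ball r δ ⊆ U) ∧
      (T : Set ℝ).PairwiseDisjoint (ball · δ) ∧
      (∀ r ∈ T, p.eval (r - δ) * p.eval (r + δ) < 0) ∧ 0 < δ := by
    filter_upwards [nhdsWithin_le_nhds ((eventually_all_finset T).mpr fun r hr =>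
        eventually_ball_subset (hU.mem_nhds (hpU r (Multiset.mem_toFinset.mp hr)))),
      nhdsWithin_le_nhds (eventually_pairwiseDisjoint_ball T),
      (eventually_all_finset T).mpr fun r hr => eventually_eval_sub_mul_eval_add_neg (hsimple r hr),
      self_mem_nhdsWithin] with δ hball hdisj hsign hδ
    exact ⟨hball, hdisj, hsign, hδ⟩
  obtain ⟨δ, hball, hdisj, hsign, hδ⟩ := hradius.exists
  filter_upwards [(eventually_all_finset T).mpr fun r hr =>
    eventually_exists_isRoot_add_C (by linarith) (hsign r hr)] with e he
  have hne : p + C e ≠ 0 := fun h => by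
    have := congrArg natDegree h
    simp only [natDegree_add_C, natDegree_zero] at this
    omega
  obtain ⟨hcard, hnd, hmem⟩ := roots_of_exists_isRoot_mem_pairwiseDisjoint hne hdisj
    (fun r hr => by simpa [Real.ball_eq_Ioo] using he r hr) (by rw [natDegree_add_C, hT])
  refine ⟨hcard.trans hT, hnd, fun x hx => ?_⟩
  obtain ⟨r, hr, hxr⟩ := hmem x hx
  exact hball r hr hxr

/-- Lemma 2 of Kovačec–Kuhlmann–Riener: if `f` is hyperbolic of degree `n`
(i.e. has `n` real roots counted with multiplicity) with exactly `s` distinct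
roots, `1 ≤ s ≤ n - 1`, all lying in the open interval `(α, β)`, then there is
a polynomial `g` of degree `n - s` such that for all small `ε > 0`, both
`f + ε g` and `f - ε g` are hyperbolic (all `n` roots real), have more than `s`
distinct roots, and all their roots lie in `(α, β)`. -/
theorem hyperbolic_perturbation (f : Polynomial ℝ) (n s : ℕ)
    (hdeg : f.natDegree = n)
    (hhyp : f.roots.card = n)
    (hs : f.roots.toFinset.card = s)
    (hs1 : 1 ≤ s) (hsn : s ≤ n - 1)
    (α β : ℝ)
    (hI : ∀ x ∈ f.roots, α < x ∧ x < β) :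
    ∃ g : Polynomial ℝ, g.natDegree = n - s ∧
      ∃ ε₀ > (0 : ℝ), ∀ ε : ℝ, 0 < ε → ε < ε₀ →
        ((f + C ε * g).roots.card = n ∧
          s < (f + C ε * g).roots.toFinset.card ∧
          ∀ x ∈ (f + C ε * g).roots, α < x ∧ x < β) ∧
        ((f - C ε * g).roots.card = n ∧
          s < (f - C ε * g).roots.toFinset.card ∧
          ∀ x ∈ (f - C ε * g).roots, α < x ∧ x < β) := by
  have hsplit : f.roots.card = f.natDegree := hhyp.trans hdeg.symm
  have hexcess : (f.roots - f.roots.dedup).card = n - s := by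
    rw [Multiset.card_sub (Multiset.dedup_le _), ← Multiset.card_toFinset, hhyp, hs]
  obtain ⟨ε₀, hε₀, hpert⟩ := Metric.eventually_nhds_iff.mp <|
    eventually_roots_add_C (p := squarefreePart f) (U := Ioo α β)
      (by rw [roots_squarefreePart, natDegree_squarefreePart, Multiset.card_toFinset])
      (by simpa only [roots_squarefreePart] using Multiset.nodup_dedup f.roots) isOpen_Ioo
      (fun x hx => hI x (by simpa [roots_squarefreePart] using hx))
  have key : ∀ e : ℝ, e ≠ 0 → |e| < ε₀ → (f + C e * excessPart f).roots.card = n ∧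
      s < (f + C e * excessPart f).roots.toFinset.card ∧
      ∀ x ∈ (f + C e * excessPart f).roots, α < x ∧ x < β := by
    intro e he he₀
    obtain ⟨hcard, hnodup, hmem⟩ := hpert (by simpa using he₀)
    rw [natDegree_squarefreePart, hs] at hcard
    have hne : squarefreePart f + C e ≠ 0 := fun h => by simp [h] at hcard; omega
    rw [card_toFinset_roots_add_C_mul_excessPart hsplit he hne hnodup,
      roots_add_C_mul_excessPart hsplit hne, Multiset.card_add, hexcess, hcard]
    have hpos := (Multiset.toFinset_nonempty.mpr
      (Multiset.card_pos.mp (by omega : 0 < (f.roots - f.roots.dedup).card))).card_pos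
    refine ⟨by omega, by omega, fun x hx => ?_⟩
    rcases Multiset.mem_add.mp hx with hx | hx
    · exact hI x (Multiset.mem_of_le tsub_le_self hx)
    · exact hmem x hx
  refine ⟨excessPart f, (natDegree_multiset_prod_X_sub_C_eq_card _).trans hexcess, ε₀, hε₀,
    fun ε hε hεε₀ => ⟨key ε hε.ne' (by rwa [abs_of_pos hε]), ?_⟩⟩
  rw [sub_eq_add_neg, ← neg_mul, ← map_neg]
  exact key (-ε) (neg_ne_zero.mpr hε.ne') (by rwa [abs_neg, abs_of_pos hε])
end

section
/- Let a_i < b_i (i = 1, …, n) and γ be real numbers, and let D' = {x ∈ ℝⁿ : a_i ≤ x_i ≤ b_i for all i, and x_1 + ⋯ + x_n = γ}. A subset F of ℝⁿ is a nonempty face of the polytope D' (i.e., F is nonempty and there exists a linear functional ℓ : ℝⁿ → ℝ such that F = {x ∈ D' : ℓ(y) ≤ ℓ(x) for all y ∈ D'}) if and only if F is nonempty and there exist a subset K ⊆ {1, …, n} and values u_l ∈ {a_l, b_l} for each l ∈ K^c = {1,…,n} \ K such that F = {x ∈ ℝⁿ : x_l = u_l for all l ∈ K^c, a_k ≤ x_k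 ≤ b_k for all k ∈ K, and Σ_{k∈K} x_k + Σ_{l∈K^c} u_l = γ}. -/
/-!
On the hyperplane `∑ xᵢ = γ` the functional `c ⬝ᵥ x` differs from `∑ (cᵢ - t) xᵢ` by the
constant `t γ`, and the latter is maximized over the box coordinatewise: `xᵢ = bᵢ` where
`cᵢ > t`, `xᵢ = aᵢ` where `cᵢ < t`, and `xᵢ` free where `cᵢ = t`. Hence every nonempty
`boxFace a b γ K u` is a face. Conversely, at a maximizer `x⁰`, moving mass from a coordinate `j`
with `aⱼ < x⁰ⱼ` to a coordinate `i` with `x⁰ᵢ < bᵢ` shows `cᵢ ≤ cⱼ`; so some threshold `t`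
separates these two families of weights, and the face is a `boxFace` with `K = {i | cᵢ = t}`.
-/

open Finset

variable {ι : Type*} [Fintype ι]

def boxSlice (a b : ι → ℝ) (γ : ℝ) : Set (ι → ℝ) :=
  {x | (∀ i, a i ≤ x i ∧ x i ≤ b i) ∧ ∑ i, x i = γ}

def boxFace [DecidableEq ι] (a b : ι → ℝ) (γ : ℝ) (K : Finset ι) (u : ι → ℝ) : Set (ι → ℝ) :=
  {x | (∀ l ∉ K, x l = u l) ∧ (∀ k ∈ K, a k ≤ x k ∧ x k ≤ b k) ∧
    (∑ k ∈ K, x k) + (∑ l ∈ Kᶜ, u l) = γ}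

theorem Finset.exists_forall_le_and_forall_ge {α κ : Type*} [LinearOrder α] [Nonempty α]
    (s t : Finset κ) (f : κ → α) (h : ∀ i ∈ s, ∀ j ∈ t, f i ≤ f j) :
    ∃ m, (∀ i ∈ s, f i ≤ m) ∧ ∀ j ∈ t, m ≤ f j := by
  rcases s.eq_empty_or_nonempty with rfl | hs
  · rcases t.eq_empty_or_nonempty with rfl | ht
    · exact ⟨Classical.arbitrary α, by simp, by simp⟩
    · exact ⟨t.inf' ht f, by simp, fun j hj => inf'_le f hj⟩
  · exact ⟨s.sup' hs f, fun i hi => le_sup' f hi, fun j hj => sup'_le hs f fun i hi => h i hi j hj⟩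

theorem mul_le_mul_of_extreme {a b x u g : ℝ} (hx : a ≤ x ∧ x ≤ b) (hb : 0 < g → u = b)
    (ha : g < 0 → u = a) : g * x ≤ g * u := by
  rcases lt_trichotomy g 0 with hg | rfl | hg
  · rw [ha hg]
    exact mul_le_mul_of_nonpos_left hx.1 hg.le
  · simp
  · rw [hb hg]
    exact mul_le_mul_of_nonneg_left hx.2 hg.le

theorem dotProduct_eq_of_sum_eq {c x : ι → ℝ} {γ : ℝ} (t : ℝ) (hx : ∑ i, x i = γ) :
    c ⬝ᵥ x = t * γ + ∑ i, (c i - t) * x i := by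
  simp only [dotProduct, sub_mul, sum_sub_distrib, ← mul_sum, hx]
  ring

theorem weight_le_of_maximizer_boxSlice {a b c x₀ : ι → ℝ} {γ : ℝ} (hx₀ : x₀ ∈ boxSlice a b γ)
    (hmax : ∀ y ∈ boxSlice a b γ, c ⬝ᵥ y ≤ c ⬝ᵥ x₀) {i j : ι} (hi : x₀ i < b i)
    (hj : a j < x₀ j) : c i ≤ c j := by
  classical
  obtain rfl | hij := eq_or_ne i j
  · exact le_rfl
  set ε := min (b i - x₀ i) (x₀ j - a j)
  have hε : 0 < ε := lt_min (sub_pos.mpr hi) (sub_pos.mpr hj)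
  have hεi : ε ≤ b i - x₀ i := min_le_left _ _
  have hεj : ε ≤ x₀ j - a j := min_le_right _ _
  set y := x₀ + Pi.single i ε - Pi.single j ε
  have hy : y ∈ boxSlice a b γ := by
    refine ⟨fun k => ?_, ?_⟩
    · obtain ⟨hak, hbk⟩ := hx₀.1 k
      simp only [y, Pi.add_apply, Pi.sub_apply, Pi.single_apply]
      split_ifs <;> subst_vars <;> first | exact absurd rfl hij | constructor <;> linarith
    · simp [y, sum_add_distrib, sum_sub_distrib, hx₀.2]
  have := hmax y hy
  simp only [y, dotProduct_add, dotProduct_sub, dotProduct_single] at this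
  exact le_of_mul_le_mul_right (by linarith) hε

section

variable [DecidableEq ι] {a b : ι → ℝ} {γ : ℝ}

theorem mem_boxFace_iff (hab : ∀ i, a i ≤ b i) {K : Finset ι} {u : ι → ℝ}
    (hu : ∀ l ∉ K, u l = a l ∨ u l = b l) {x : ι → ℝ} :
    x ∈ boxFace a b γ K u ↔ x ∈ boxSlice a b γ ∧ ∀ l ∉ K, x l = u l := by
  have hsum (hfix : ∀ l ∉ K, x l = u l) : ∑ i, x i = ∑ k ∈ K, x k + ∑ l ∈ Kᶜ, u l := by
    rw [← sum_add_sum_compl K x]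
    congr 1
    exact sum_congr rfl fun l hl => hfix l (mem_compl.mp hl)
  constructor
  · rintro ⟨hfix, hbox, hγ⟩
    refine ⟨⟨fun i => ?_, (hsum hfix).trans hγ⟩, hfix⟩
    by_cases hi : i ∈ K
    · exact hbox i hi
    · rw [hfix i hi]
      rcases hu i hi with h | h <;> rw [h]
      exacts [⟨le_rfl, hab i⟩, ⟨hab i, le_rfl⟩]
  · rintro ⟨⟨hbox, hγ⟩, hfix⟩
    exact ⟨hfix, fun k _ => hbox k, (hsum hfix).symm.trans hγ⟩

theorem maximizers_eq_boxFace (hab : ∀ i, a i ≤ b i) {K : Finset ι} {u c : ι → ℝ} {t : ℝ}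
    (hK : ∀ i, i ∈ K ↔ c i = t) (hb : ∀ i, t < c i → u i = b i) (ha : ∀ i, c i < t → u i = a i)
    (hne : (boxFace a b γ K u).Nonempty) :
    {x ∈ boxSlice a b γ | ∀ y ∈ boxSlice a b γ, c ⬝ᵥ y ≤ c ⬝ᵥ x} = boxFace a b γ K u := by
  have hu (l) (hl : l ∉ K) : u l = a l ∨ u l = b l :=
    Ne.lt_or_gt ((hK l).not.mp hl) |>.imp (ha l) (hb l)
  set φ : (ι → ℝ) → ℝ := fun x => ∑ i, (c i - t) * x i
  have hobj {x} (hx : x ∈ boxSlice a b γ) : c ⬝ᵥ x = t * γ + φ x := dotProduct_eq_of_sum_eq t hx.2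
  have hφ_le {x} (hx : x ∈ boxSlice a b γ) : φ x ≤ φ u :=
    sum_le_sum fun i _ => mul_le_mul_of_extreme (hx.1 i) (fun h => hb i (sub_pos.mp h))
      (fun h => ha i (sub_neg.mp h))
  have hφ_eq {x} (hx : x ∈ boxSlice a b γ) : φ x = φ u ↔ ∀ l ∉ K, x l = u l := by
    rw [sum_eq_sum_iff_of_le fun i _ => mul_le_mul_of_extreme (hx.1 i)
      (fun h => hb i (sub_pos.mp h)) (fun h => ha i (sub_neg.mp h))]
    simp only [mem_univ, true_implies, mul_eq_mul_left_iff, sub_eq_zero, ← hK]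
    exact forall_congr' fun l => or_iff_not_imp_right
  obtain ⟨x₀, hx₀⟩ := hne
  rw [mem_boxFace_iff hab hu] at hx₀
  have hx₀φ : φ x₀ = φ u := (hφ_eq hx₀.1).mpr hx₀.2
  ext x
  rw [mem_boxFace_iff hab hu]
  constructor
  · rintro ⟨hx, hmax⟩
    refine ⟨hx, (hφ_eq hx).mp (le_antisymm (hφ_le hx) ?_)⟩
    have := hmax x₀ hx₀.1
    rwa [hobj hx₀.1, hobj hx, hx₀φ, add_le_add_iff_left] at this
  · rintro ⟨hx, hfix⟩
    refine ⟨hx, fun y hy => ?_⟩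
    rw [hobj hy, hobj hx, (hφ_eq hx).mpr hfix]
    exact add_le_add_right (hφ_le hy) _

theorem exists_boxFace_eq_maximizers (hab : ∀ i, a i ≤ b i) {c x₀ : ι → ℝ}
    (hx₀ : x₀ ∈ boxSlice a b γ) (hmax : ∀ y ∈ boxSlice a b γ, c ⬝ᵥ y ≤ c ⬝ᵥ x₀) :
    ∃ (K : Finset ι) (u : ι → ℝ), (∀ l ∉ K, u l = a l ∨ u l = b l) ∧
      {x ∈ boxSlice a b γ | ∀ y ∈ boxSlice a b γ, c ⬝ᵥ y ≤ c ⬝ᵥ x} = boxFace a b γ K u := by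
  obtain ⟨t, hlow, hhigh⟩ := exists_forall_le_and_forall_ge
    {i | x₀ i < b i} {j | a j < x₀ j} c fun i hi j hj =>
      weight_le_of_maximizer_boxSlice hx₀ hmax (mem_filter.mp hi).2 (mem_filter.mp hj).2
  simp only [mem_filter, mem_univ, true_and] at hlow hhigh
  set K : Finset ι := {i | c i = t}
  set u : ι → ℝ := fun i => if t < c i then b i else a i
  have hK (i) : i ∈ K ↔ c i = t := by simp [K]
  have hb (i) (h : t < c i) : u i = b i := if_pos h
  have ha (i) (h : c i < t) : u i = a i := if_neg h.not_gt
  have hu (l) (_ : l ∉ K) : u l = a l ∨ u l = b l := (ite_eq_or_eq _ _ _).symm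
  refine ⟨K, u, hu, maximizers_eq_boxFace hab hK hb ha ⟨x₀, (mem_boxFace_iff hab hu).mpr
    ⟨hx₀, fun l hl => ?_⟩⟩⟩
  rcases Ne.lt_or_gt ((hK l).not.mp hl) with h | h
  · rw [ha l h]
    exact ((hx₀.1 l).1.lt_or_eq.resolve_left fun h' => (hhigh l h').not_gt h).symm
  · rw [hb l h]
    exact (hx₀.1 l).2.lt_or_eq.resolve_left fun h' => (hlow l h').not_gt h

theorem exists_maximizers_eq_boxFace (hab : ∀ i, a i ≤ b i) {K : Finset ι} {u : ι → ℝ}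
    (hu : ∀ l ∉ K, u l = a l ∨ u l = b l) (hne : (boxFace a b γ K u).Nonempty) :
    ∃ c : ι → ℝ,
      {x ∈ boxSlice a b γ | ∀ y ∈ boxSlice a b γ, c ⬝ᵥ y ≤ c ⬝ᵥ x} = boxFace a b γ K u := by
  refine ⟨fun i => if i ∈ K then 0 else if u i = b i then 1 else -1,
    maximizers_eq_boxFace (t := 0) hab (fun i => ?_) (fun i h => ?_) (fun i h => ?_) hne⟩
  · split_ifs <;> simp_all
  · split_ifs at h with hi hb <;> norm_num at h
    exact hb
  · split_ifs at h with hi hb <;> norm_num at h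
    exact (hu i hi).resolve_right hb

end

/-- Kovačec–Kuhlmann–Riener, Lemma 4 (characterization of faces): a subset `F`
of `ℝⁿ` is a nonempty face of the polytope
`D' = {x : aᵢ ≤ xᵢ ≤ bᵢ (∀ i), Σ xᵢ = γ}` if and only if it is nonempty and of
the form `{x : x_l = u_l (l ∈ Kᶜ), a_k ≤ x_k ≤ b_k (k ∈ K), Σ_{k∈K} x_k + Σ_{l∈Kᶜ} u_l = γ}`
for some `K ⊆ {1,…,n}` and `u_l ∈ {a_l, b_l}` for `l ∈ Kᶜ`. -/
theorem faces_of_polytope (n : ℕ) (a b : Fin n → ℝ) (hab : ∀ i, a i < b i) (γ : ℝ)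
    (D' : Set (Fin n → ℝ))
    (hD' : D' = {x | (∀ i, a i ≤ x i ∧ x i ≤ b i) ∧ ∑ i, x i = γ})
    (F : Set (Fin n → ℝ)) :
    (F.Nonempty ∧ ∃ ℓ : (Fin n → ℝ) →ₗ[ℝ] ℝ,
        F = {x ∈ D' | ∀ y ∈ D', ℓ y ≤ ℓ x}) ↔
    (F.Nonempty ∧ ∃ (K : Finset (Fin n)) (u : Fin n → ℝ),
        (∀ l ∉ K, u l = a l ∨ u l = b l) ∧
        F = {x | (∀ l ∉ K, x l = u l) ∧ (∀ k ∈ K, a k ≤ x k ∧ x k ≤ b k) ∧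
          (∑ k ∈ K, x k) + (∑ l ∈ Kᶜ, u l) = γ}) := by
  have hab' (i) : a i ≤ b i := (hab i).le
  subst hD'
  constructor
  · rintro ⟨⟨x₀, hx₀⟩, ℓ, rfl⟩
    obtain ⟨c, rfl⟩ := (dotProductEquiv ℝ (Fin n)).surjective ℓ
    exact ⟨⟨x₀, hx₀⟩, exists_boxFace_eq_maximizers hab' hx₀.1 hx₀.2⟩
  · rintro ⟨hne, K, u, hu, rfl⟩
    obtain ⟨c, hc⟩ := exists_maximizers_eq_boxFace hab' hu hne
    exact ⟨hne, dotProductEquiv ℝ (Fin n) c, hc.symm⟩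
end

section
/- Let n ≥ 2, γ ∈ ℝ, let D = {x ∈ ℝⁿ : 0 ≤ x_i ≤ 1 for all i, x_1 + ⋯ + x_n = γ}, and let φ(x) = Σ_{j=0}^{n} c_j E_j(x) with real coefficients c_j such that c_j ≠ 0 for some j ≥ 2. If p ∈ D satisfies 0 < p_i < 1 for all i (i.e., p is an interior point of D relative to the hyperplane {x : x_1 + ⋯ + x_n = γ}) and p is a local extremum of φ on D, then p = (γ/n, γ/n, …, γ/n). -/
/-!
Along a line `p + t • v` in the slice (`∑ vᵢ = 0`) the multiaffine function `φ` is a polynomial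
in `t` whose coefficient of `t ^ r` is `∑_{|S| = r} v^S ∂^S φ(p)`, and at an interior local
minimum the first nonvanishing coefficient is nonnegative. Testing `v` and `-v` kills the linear
term. If `pᵢ ≠ pₖ`, the transposition of `i` and `k` is the translation by `(pₖ - pᵢ)(eᵢ - eₖ)` and
fixes the symmetric `φ`, which forces `∂ᵢ∂ₖ φ(p) = 0`; the parallelogram law for the nonnegative
quadratic term extends this to all pairs once `p` is not constant. For `|S| ≥ 3`, directions
supported on `S` whose product over `S` has either sign give `∂^S φ(p) = 0` by induction on `|S|`.
Finally `∂^S φ(p) = c_{|S|} + ∑_{T ⊋ S} c_{|T|} p^{T \ S}`, so all `c_j` with `j ≥ 2` vanish by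
downward induction.
-/

open Finset Filter Topology

theorem nonneg_of_isLocalMin_sum_pow {a : ℕ → ℝ} {N m : ℕ} (hm : 0 < m) (hmN : m ≤ N)
    (hlow : ∀ s, 0 < s → s < m → a s = 0)
    (hmin : IsLocalMin (fun t : ℝ => ∑ r ∈ range (N + 1), a r * t ^ r) 0) :
    0 ≤ a m := by
  set g : ℝ → ℝ := fun t => ∑ k ∈ range (N + 1 - m), a (m + k) * t ^ k
  have hsplit (t : ℝ) : ∑ r ∈ range (N + 1), a r * t ^ r = a 0 + t ^ m * g t := by
    rw [← sum_range_add_sum_Ico _ (by omega : m ≤ N + 1), sum_Ico_eq_sum_range,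
      sum_eq_single_of_mem 0 (by simpa using hm) fun s hs hs0 =>
        by rw [hlow s (Nat.pos_of_ne_zero hs0) (mem_range.1 hs), zero_mul]]
    simp only [g, mul_sum, pow_add]
    congr 1
    · simp
    · exact sum_congr rfl fun k _ => by ring
  have hg0 : g 0 = a m := by
    simp only [g]
    rw [show N + 1 - m = N - m + 1 by omega, sum_range_succ']
    simp
  have hg : Tendsto g (𝓝[>] 0) (𝓝 (a m)) :=
    hg0 ▸ (continuous_finsetSum _ fun k _ => by fun_prop).continuousWithinAt
  refine ge_of_tendsto hg ?_
  filter_upwards [hmin.filter_mono nhdsWithin_le_nhds, self_mem_nhdsWithin]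
    with t ht (htpos : 0 < t)
  have : 0 ≤ t ^ m * g t := by simpa [hsplit, pow_succ, hm.ne'] using ht
  exact nonneg_of_mul_nonneg_right (by linarith) (pow_pos htpos m)

section Multiaffine

variable {ι : Type*} [Fintype ι]

noncomputable def multiaffine (a : Finset ι → ℝ) (x : ι → ℝ) : ℝ :=
  ∑ T, a T * ∏ i ∈ T, x i

theorem multiaffine_comp_perm (c : ℕ → ℝ) (x : ι → ℝ) (σ : Equiv.Perm ι) :
    multiaffine (fun T => c #T) (x ∘ σ) = multiaffine (fun T => c #T) x := by
  simp only [multiaffine]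
  rw [← (Equiv.finsetCongr σ).sum_comp fun T => c #T * ∏ i ∈ T, x i]
  simp [Equiv.finsetCongr_apply, prod_map]

def IsLocalMinAlongSlice (f : (ι → ℝ) → ℝ) (x : ι → ℝ) : Prop :=
  ∀ v : ι → ℝ, ∑ i, v i = 0 → IsLocalMin (fun t : ℝ => f (x + t • v)) 0

theorem IsLocalMinOn.isLocalMinAlongSlice {f : (ι → ℝ) → ℝ} {x : ι → ℝ} {K : Set (ι → ℝ)}
    (hK : K ∈ 𝓝 x) (h : IsLocalMinOn f (K ∩ {y | ∑ i, y i = ∑ i, x i}) x) :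
    IsLocalMinAlongSlice f x := by
  intro v hv
  have hline : Tendsto (fun t : ℝ => x + t • v) (𝓝 0) (𝓝 x) := by
    simpa using ((by fun_prop : Continuous fun t : ℝ => x + t • v).tendsto 0)
  refine IsMinFilter.comp_tendsto (g := fun t : ℝ => x + t • v)
    (by rw [zero_smul, add_zero]; exact h) ?_
  refine tendsto_nhdsWithin_iff.2 ⟨hline, ?_⟩
  filter_upwards [hline.eventually_mem hK] with t ht
  refine ⟨ht, ?_⟩
  simp [sum_add_distrib, ← mul_sum, hv]

variable [DecidableEq ι]

/-- The mixed partial derivative `∂^S (multiaffine a)` at `x`. -/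
noncomputable def mixedPartial (a : Finset ι → ℝ) (x : ι → ℝ) (S : Finset ι) : ℝ :=
  ∑ T with S ⊆ T, a T * ∏ i ∈ T \ S, x i

noncomputable def taylorCoeff (a : Finset ι → ℝ) (x v : ι → ℝ) (r : ℕ) : ℝ :=
  ∑ S ∈ powersetCard r univ, (∏ i ∈ S, v i) * mixedPartial a x S

theorem multiaffine_add_smul (a : Finset ι → ℝ) (x v : ι → ℝ) (t : ℝ) :
    multiaffine a (x + t • v) =
      ∑ r ∈ range (Fintype.card ι + 1), taylorCoeff a x v r * t ^ r := by
  have hprod (S : Finset ι) : (∏ i ∈ S, t * v i) = t ^ #S * ∏ i ∈ S, v i := by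
    rw [prod_mul_distrib, prod_const]
  calc multiaffine a (x + t • v)
      = ∑ T, ∑ S ∈ T.powerset, a T * ((∏ i ∈ S, t * v i) * ∏ i ∈ T \ S, x i) := by
        simp only [multiaffine, Pi.add_apply, Pi.smul_apply, smul_eq_mul, add_comm (x _),
          prod_add, mul_sum]
    _ = ∑ S, ∑ T with S ⊆ T, a T * ((∏ i ∈ S, t * v i) * ∏ i ∈ T \ S, x i) :=
        sum_comm' fun T S => by simp
    _ = ∑ S ∈ univ.powerset, (∏ i ∈ S, v i) * mixedPartial a x S * t ^ #S := by
        simp only [powerset_univ, mixedPartial, mul_sum, sum_mul]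
        exact sum_congr rfl fun S _ => sum_congr rfl fun T _ => by rw [hprod]; ring
    _ = _ := by
        rw [sum_powerset, card_univ]
        simp only [taylorCoeff, sum_mul]
        exact sum_congr rfl fun r _ => sum_congr rfl fun S hS => by
          rw [(mem_powersetCard.1 hS).2]

variable {a : Finset ι → ℝ} {x v : ι → ℝ}

theorem taylorCoeff_nonneg (h : IsLocalMinAlongSlice (multiaffine a) x) (hv : ∑ i, v i = 0)
    {m : ℕ} (hm : 0 < m) (hlow : ∀ s, 0 < s → s < m → taylorCoeff a x v s = 0) :
    0 ≤ taylorCoeff a x v m := by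
  by_cases hmN : m ≤ Fintype.card ι
  · exact nonneg_of_isLocalMin_sum_pow hm hmN hlow (by simpa [multiaffine_add_smul] using h v hv)
  · rw [taylorCoeff, powersetCard_eq_empty.2 (by rw [card_univ]; omega), sum_empty]

theorem taylorCoeff_neg (r : ℕ) : taylorCoeff a x (-v) r = (-1) ^ r * taylorCoeff a x v r := by
  simp only [taylorCoeff, mul_sum]
  exact sum_congr rfl fun S hS => by
    simp only [Pi.neg_apply]
    rw [prod_neg, (mem_powersetCard.1 hS).2, mul_assoc]

theorem taylorCoeff_one_eq_zero (h : IsLocalMinAlongSlice (multiaffine a) x)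
    (hv : ∑ i, v i = 0) : taylorCoeff a x v 1 = 0 := by
  have hpos := taylorCoeff_nonneg h hv one_pos (by omega)
  have hneg := taylorCoeff_nonneg (v := -v) h (by simp [hv]) one_pos (by omega)
  rw [taylorCoeff_neg] at hneg
  linarith

theorem taylorCoeff_eq_sum_of_support_subset {T : Finset ι} (hv : ∀ i ∉ T, v i = 0) (r : ℕ) :
    taylorCoeff a x v r = ∑ S ∈ T.powersetCard r, (∏ i ∈ S, v i) * mixedPartial a x S := by
  refine (sum_subset (powersetCard_mono (subset_univ T)) fun S hS hST => ?_).symm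
  obtain ⟨i, hiS, hiT⟩ :=
    not_subset.1 fun h => hST (mem_powersetCard.2 ⟨h, (mem_powersetCard.1 hS).2⟩)
  rw [prod_eq_zero hiS (hv i hiT), zero_mul]

theorem taylorCoeff_card_of_support_subset {T : Finset ι} (hv : ∀ i ∉ T, v i = 0) :
    taylorCoeff a x v #T = (∏ i ∈ T, v i) * mixedPartial a x T := by
  rw [taylorCoeff_eq_sum_of_support_subset hv, powersetCard_self, sum_singleton]

theorem taylorCoeff_eq_zero_of_support_subset {T : Finset ι} (hv : ∀ i ∉ T, v i = 0) {r : ℕ}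
    (hr : #T < r) : taylorCoeff a x v r = 0 := by
  rw [taylorCoeff_eq_sum_of_support_subset hv, powersetCard_eq_empty.2 hr, sum_empty]

theorem taylorCoeff_two_single_sub_single {i k : ι} (hik : i ≠ k) :
    taylorCoeff a x (Pi.single i 1 - Pi.single k 1) 2 = -mixedPartial a x {i, k} := by
  rw [← card_pair hik, taylorCoeff_card_of_support_subset, prod_pair hik]
  · simp [hik, hik.symm]
  · intro j hj
    simp_all

theorem taylorCoeff_two_add_add_sub (u w : ι → ℝ) :
    taylorCoeff a x (u + w) 2 + taylorCoeff a x (u - w) 2 =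
      2 * taylorCoeff a x u 2 + 2 * taylorCoeff a x w 2 := by
  simp only [taylorCoeff, mul_sum, ← sum_add_distrib]
  refine sum_congr rfl fun S hS => ?_
  obtain ⟨i, k, hik, rfl⟩ := card_eq_two.1 (mem_powersetCard.1 hS).2
  simp only [prod_pair hik, Pi.add_apply, Pi.sub_apply]
  ring

theorem eq_zero_of_forall_sum_eq_zero_prod_mul_nonneg {S : Finset ι} (hS : 3 ≤ #S) {ψ : ℝ}
    (h : ∀ v : ι → ℝ, (∀ i ∉ S, v i = 0) → ∑ i, v i = 0 → 0 ≤ (∏ i ∈ S, v i) * ψ) :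
    ψ = 0 := by
  obtain ⟨a, ha, b, hb, hab⟩ := one_lt_card.1 (by omega : 1 < #S)
  -- `v β` is `1` on `S` except `v β a = 2 - #S - β` and `v β b = β`; `∏ S, v β` takes both signs.
  set v : ℝ → ι → ℝ := fun β i =>
    (if i ∈ S then 1 else 0) + (Pi.single a (1 - #S - β) : ι → ℝ) i +
      (Pi.single b (β - 1) : ι → ℝ) i
  have hsupp (β : ℝ) : ∀ i ∉ S, v β i = 0 := fun i hi => by
    simp [v, hi, ne_of_mem_of_not_mem ha hi |>.symm, ne_of_mem_of_not_mem hb hi |>.symm]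
  have hsum (β : ℝ) : ∑ i, v β i = 0 := by
    simp only [v, sum_add_distrib, sum_ite_mem, univ_inter, sum_const, nsmul_eq_mul, mul_one,
      sum_pi_single', mem_univ, ite_true]
    ring
  have hprod (β : ℝ) : ∏ i ∈ S, v β i = -β * (#S - 2 + β) := by
    rw [← mul_prod_erase S _ ha, ← mul_prod_erase _ _ (mem_erase.2 ⟨hab.symm, hb⟩),
      prod_eq_one fun i hi => ?_]
    · simp only [v, ha, hb, ite_true, Pi.single_eq_same, Pi.single_eq_of_ne hab,
        Pi.single_eq_of_ne hab.symm, add_zero]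
      ring
    · obtain ⟨hib, hia, hiS⟩ : i ≠ b ∧ i ≠ a ∧ i ∈ S := by simpa using hi
      simp [v, hiS, hia, hib]
  have hneg := h (v 1) (hsupp 1) (hsum 1)
  have hpos := h (v (-(#S - 2) / 2)) (hsupp _) (hsum _)
  rw [hprod] at hneg hpos
  have hS' : (3 : ℝ) ≤ #S := by exact_mod_cast hS
  nlinarith

theorem mixedPartial_eq_zero_of_three_le (h : IsLocalMinAlongSlice (multiaffine a) x)
    {T : Finset ι} (hT : 3 ≤ #T)
    (hlow : ∀ S : Finset ι, 2 ≤ #S → #S < #T → mixedPartial a x S = 0) :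
    mixedPartial a x T = 0 := by
  refine eq_zero_of_forall_sum_eq_zero_prod_mul_nonneg hT fun v hsupp hv => ?_
  rw [← taylorCoeff_card_of_support_subset hsupp]
  refine taylorCoeff_nonneg h hv (by omega) fun s hs hsT => ?_
  obtain rfl | hs2 : s = 1 ∨ 2 ≤ s := by omega
  · exact taylorCoeff_one_eq_zero h hv
  · exact sum_eq_zero fun S hS => by
      rw [hlow S ((mem_powersetCard.1 hS).2 ▸ hs2) ((mem_powersetCard.1 hS).2 ▸ hsT), mul_zero]

theorem eq_zero_of_forall_mixedPartial_eq_zero {k : ℕ}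
    (h : ∀ S : Finset ι, k ≤ #S → mixedPartial a x S = 0) (T : Finset ι) (hT : k ≤ #T) :
    a T = 0 := by
  refine strongDownwardInductionOn (n := Fintype.card ι) (p := fun T => k ≤ #T → a T = 0) T
    (fun T ih _ hT => ?_) (card_le_univ T) hT
  rw [← h T hT, mixedPartial, sum_eq_single_of_mem T (by simp) fun U hU hUT => ?_]
  · simp
  · have hTU : T ⊂ U := ssubset_of_subset_of_ne (mem_filter.1 hU).2 (Ne.symm hUT)
    rw [ih (card_le_univ U) hTU (hT.trans (card_lt_card hTU).le), zero_mul]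

variable {c : ℕ → ℝ}

theorem mixedPartial_pair_eq_zero_of_ne (h : IsLocalMinAlongSlice (multiaffine fun T => c #T) x)
    {i k : ι} (hik : i ≠ k) (hx : x i ≠ x k) : mixedPartial (fun T => c #T) x {i, k} = 0 := by
  set a : Finset ι → ℝ := fun T => c #T
  set v : ι → ℝ := Pi.single i 1 - Pi.single k 1
  have hv : ∑ j, v j = 0 := by simp [v, sum_sub_distrib]
  have hsupp : ∀ j ∉ ({i, k} : Finset ι), v j = 0 := fun j hj => by simp_all [v]
  have hcard : 2 ≤ Fintype.card ι := card_pair hik ▸ card_le_univ {i, k}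
  have hquad (t : ℝ) :
      multiaffine a (x + t • v) = taylorCoeff a x v 0 + taylorCoeff a x v 2 * t ^ 2 := by
    rw [multiaffine_add_smul, sum_eq_add_of_mem 0 2 (by simp)
      (mem_range.2 (by omega)) two_ne_zero.symm]
    · simp
    · intro r _ ⟨hr0, hr2⟩
      obtain rfl | hr : r = 1 ∨ 2 < r := by omega
      · rw [taylorCoeff_one_eq_zero h hv, zero_mul]
      · rw [taylorCoeff_eq_zero_of_support_subset hsupp (by rwa [card_pair hik]), zero_mul]
  have hswap : x + (x k - x i) • v = x ∘ Equiv.swap i k := by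
    funext j
    by_cases hji : j = i
    · subst hji; simp [v, hik]
    · by_cases hjk : j = k
      · subst hjk; simp [v, hik.symm]
      · simp [v, hji, hjk, Equiv.swap_apply_of_ne_of_ne]
  have h0 : multiaffine a x = taylorCoeff a x v 0 := by simpa using hquad 0
  have hd := hquad (x k - x i)
  rw [hswap, multiaffine_comp_perm, taylorCoeff_two_single_sub_single hik] at hd
  have hd2 : (x k - x i) ^ 2 ≠ 0 := pow_ne_zero _ (sub_ne_zero.2 hx.symm)
  have : mixedPartial a x {i, k} * (x k - x i) ^ 2 = 0 := by linarith
  exact (mul_eq_zero.1 this).resolve_right hd2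

theorem mixedPartial_pair_eq_zero (h : IsLocalMinAlongSlice (multiaffine fun T => c #T) x)
    (hx : ∃ j l, x j ≠ x l) {i k : ι} (hik : i ≠ k) :
    mixedPartial (fun T => c #T) x {i, k} = 0 := by
  rcases ne_or_eq (x i) (x k) with hne | heq
  · exact mixedPartial_pair_eq_zero_of_ne h hik hne
  obtain ⟨w, hw⟩ : ∃ w, x i ≠ x w := by
    obtain ⟨j, l, hjl⟩ := hx
    by_cases hj : x i = x j
    · exact ⟨l, hj ▸ hjl⟩
    · exact ⟨j, hj⟩
  have hiw : i ≠ w := by rintro rfl; exact hw rfl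
  have hkw : k ≠ w := by rintro rfl; exact hw heq
  have hQ : ∀ v : ι → ℝ, ∑ j, v j = 0 → 0 ≤ taylorCoeff (fun T => c #T) x v 2 :=
    fun v hv => taylorCoeff_nonneg h hv two_pos fun s hs hs2 => by
      obtain rfl : s = 1 := by omega
      exact taylorCoeff_one_eq_zero h hv
  set u : ι → ℝ := Pi.single i 1 - Pi.single w 1
  set u' : ι → ℝ := Pi.single k 1 - Pi.single w 1
  -- The quadratic form `taylorCoeff _ x · 2` is nonnegative on the slice and vanishes at `u`
  -- and `u'`, so by the parallelogram law it vanishes at `u - u'`.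
  have hsum : taylorCoeff (fun T => c #T) x (u + u') 2 + taylorCoeff (fun T => c #T) x (u - u') 2
      = 0 := by
    rw [taylorCoeff_two_add_add_sub, taylorCoeff_two_single_sub_single hiw,
      taylorCoeff_two_single_sub_single hkw, mixedPartial_pair_eq_zero_of_ne h hiw hw,
      mixedPartial_pair_eq_zero_of_ne h hkw (heq ▸ hw)]
    ring
  have hsub : u - u' = Pi.single i 1 - Pi.single k 1 := sub_sub_sub_cancel_right _ _ _
  have h1 := hQ (u + u') (by simp [u, u', sum_add_distrib, sum_sub_distrib])
  have h2 := hQ (u - u') (by rw [hsub]; simp [sum_sub_distrib])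
  have hzero : taylorCoeff (fun T => c #T) x (u - u') 2 = 0 := by linarith
  rwa [hsub, taylorCoeff_two_single_sub_single hik, neg_eq_zero] at hzero

theorem mixedPartial_eq_zero_of_two_le
    (h : IsLocalMinAlongSlice (multiaffine fun T => c #T) x) (hx : ∃ i k, x i ≠ x k)
    (S : Finset ι) (hS : 2 ≤ #S) : mixedPartial (fun T => c #T) x S = 0 := by
  induction hr : #S using Nat.strong_induction_on generalizing S with
  | _ r ih =>
    obtain h2 | h3 : #S = 2 ∨ 3 ≤ #S := by omega
    · obtain ⟨i, k, hik, rfl⟩ := card_eq_two.1 h2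
      exact mixedPartial_pair_eq_zero h hx hik
    · exact mixedPartial_eq_zero_of_three_le h h3 fun U hU hUS => ih _ (hr ▸ hUS) U hU rfl

theorem eq_zero_of_isLocalMinAlongSlice
    (h : IsLocalMinAlongSlice (multiaffine fun T => c #T) x) (hx : ∃ i k, x i ≠ x k)
    {j : ℕ} (hj : 2 ≤ j) (hjn : j ≤ Fintype.card ι) : c j = 0 := by
  obtain ⟨T, -, rfl⟩ := exists_subset_card_eq (s := (univ : Finset ι)) (n := j) (by rwa [card_univ])
  exact eq_zero_of_forall_mixedPartial_eq_zero (mixedPartial_eq_zero_of_two_le h hx) T hj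

end Multiaffine

theorem sum_mul_esymm_eq_multiaffine (n : ℕ) (c : ℕ → ℝ) (x : Fin n → ℝ) :
    ∑ j ∈ range (n + 1), c j * esymm n j x = multiaffine (fun T => c #T) x := by
  rw [multiaffine, ← powerset_univ, sum_powerset, card_univ, Fintype.card_fin]
  simp only [esymm, mul_sum]
  exact sum_congr rfl fun j _ => sum_congr rfl fun T hT => by rw [(mem_powersetCard.1 hT).2]

theorem interior_extremum_of_cube_slice_general (n : ℕ) (γ : ℝ) (c : ℕ → ℝ)
    (hdeg : ∃ j, 2 ≤ j ∧ j ≤ n ∧ c j ≠ 0)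
    (φ : (Fin n → ℝ) → ℝ)
    (hφ : ∀ x, φ x = ∑ j ∈ Finset.range (n + 1), c j * esymm n j x)
    (D : Set (Fin n → ℝ))
    (hD : D = {x | (∀ i, 0 ≤ x i ∧ x i ≤ 1) ∧ ∑ i, x i = γ})
    (p : Fin n → ℝ) (hp : p ∈ D)
    (hint : ∀ i, 0 < p i ∧ p i < 1)
    (hext : IsLocalMinOn φ D p ∨ IsLocalMaxOn φ D p) :
    p = fun _ => γ / n := by
  subst hD
  obtain ⟨-, hsum⟩ := hp
  obtain ⟨j, hj, hjn, hcj⟩ := hdeg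
  have hφ' : φ = multiaffine fun T => c #T :=
    funext fun x => (hφ x).trans (sum_mul_esymm_eq_multiaffine n c x)
  have hcube : {x : Fin n → ℝ | ∀ i, 0 ≤ x i ∧ x i ≤ 1} ∈ 𝓝 p :=
    mem_of_superset (set_pi_mem_nhds Set.finite_univ fun i _ => Icc_mem_nhds (hint i).1 (hint i).2)
      fun x hx i => hx i trivial
  have hslice : ∀ f, IsLocalMinOn f {x | (∀ i, 0 ≤ x i ∧ x i ≤ 1) ∧ ∑ i, x i = γ} p →
      IsLocalMinAlongSlice f p := fun f hf =>
    IsLocalMinOn.isLocalMinAlongSlice hcube (by rwa [hsum])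
  suffices hconst : ∀ i k, p i = p k by
    funext i
    rw [← hsum, sum_congr rfl fun k _ => hconst k i, sum_const, card_univ, Fintype.card_fin,
      nsmul_eq_mul, mul_div_cancel_left₀ _ (by simpa using i.pos.ne')]
  by_contra! hx
  rcases hext with hmin | hmax
  · exact hcj (eq_zero_of_isLocalMinAlongSlice (hslice _ (hφ' ▸ hmin)) hx hj (by simpa))
  · have hneg : (fun x => -φ x) = multiaffine fun T => (-c) #T := by
      funext x
      simp [hφ', multiaffine]
    exact hcj (neg_eq_zero.1 (eq_zero_of_isLocalMinAlongSlice (hslice _ (hneg ▸ hmax.neg)) hx hj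
      (by simpa)))

/-- Foregger's theorem: a real linear combination `φ` of elementary symmetric
polynomials of degree at least two, restricted to
`D = {x ∈ [0,1]ⁿ : Σ xᵢ = γ}`, can have an interior local extremum only at the
symmetric point `(γ/n, …, γ/n)`. -/
theorem interior_extremum_of_cube_slice (n : ℕ) (hn : 2 ≤ n) (γ : ℝ) (c : ℕ → ℝ)
    (hdeg : ∃ j, 2 ≤ j ∧ j ≤ n ∧ c j ≠ 0)
    (φ : (Fin n → ℝ) → ℝ)
    (hφ : ∀ x, φ x = ∑ j ∈ Finset.range (n + 1), c j * esymm n j x)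
    (D : Set (Fin n → ℝ))
    (hD : D = {x | (∀ i, 0 ≤ x i ∧ x i ≤ 1) ∧ ∑ i, x i = γ})
    (p : Fin n → ℝ) (hp : p ∈ D)
    (hint : ∀ i, 0 < p i ∧ p i < 1)
    (hext : IsLocalMinOn φ D p ∨ IsLocalMaxOn φ D p) :
    p = fun _ => γ / n :=
  interior_extremum_of_cube_slice_general n γ c hdeg φ hφ D hD p hp hint hext
end
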